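/- arXiv:2010.01637 — 6 statements merged into one kernel-verified Lean document; each statement's English description precedes it below -/
import Mathlib

section
/- Let x be a random vector in ℝ^d whose coordinates are i.i.d. standard Gaussian N(0,1), let w_* ∈ ℝ^d, and let W ∈ ℝ^{d×K} have columns w^{(1)}, …, w^{(K)}. Then for every k ∈ {1, …, K}, the population gradient E[ (Σ_{j=1}^K ⟨x, w^{(j)}⟩² − ⟨x, w_*⟩²) ⟨x, w^{(k)}⟩ x ] equals (3‖w^{(k)}‖² − ‖w_*‖²) w^{(k)} − 2⟨w_*, w^{(k)}⟩ w_* + Σ_{j≠k} ( 2⟨w^{(j)}, w^{(k)}⟩ w^{(j)} + ‖w^{(j)}‖² w^{(k)} ). -/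
open MeasureTheory ProbabilityTheory Matrix

open scoped NNReal

/-!
Expanding the dot products reduces everything to fourth moments `E[x_p x_q x_r x_s]` of independent
standard Gaussians, which are products of one-dimensional moments; Stein's identity
`E[y f(y)] = E[f'(y)]` gives `E[y²] = 1`, `E[y⁴] = 3`, and symmetry kills the odd moments. This is
Isserlis' theorem `E[⟨x,a⟩⟨x,b⟩⟨x,c⟩⟨x,e⟩] = ⟨a,b⟩⟨c,e⟩ + ⟨a,c⟩⟨b,e⟩ + ⟨a,e⟩⟨b,c⟩`, and taking
`a = b = w^{(j)}`, `c = w^{(k)}` and `e` the `i`-th basis vector gives each term of the gradient.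
-/

lemma Multiset.prod_map_eq_prod_pow_count {ι M : Type*} [Fintype ι] [DecidableEq ι]
    [CommMonoid M] (m : Multiset ι) (f : ι → M) : (m.map f).prod = ∏ l, f l ^ m.count l := by
  rw [Finset.prod_multiset_map_count]
  exact Finset.prod_subset (Finset.subset_univ _) fun l _ hl ↦ by simp_all

namespace ProbabilityTheory

section OneDimensional

variable {μ : ℝ} {v : ℝ≥0}

lemma hasDerivAt_gaussianPDFReal (x : ℝ) :
    HasDerivAt (gaussianPDFReal μ v) (-((x - μ) / v) * gaussianPDFReal μ v x) x := by
  have h : HasDerivAt (fun y ↦ -(y - μ) ^ 2 / (2 * v)) (-(2 * (x - μ)) / (2 * v)) x := by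
    simpa using (((hasDerivAt_id x).sub_const μ).pow 2).neg.div_const (2 * (v : ℝ))
  rw [gaussianPDFReal_def]
  exact (h.exp.const_mul _).congr_deriv (by ring)

lemma integrable_gaussianPDFReal_mul (hv : v ≠ 0) {f : ℝ → ℝ}
    (hf : Integrable f (gaussianReal μ v)) :
    Integrable (fun x ↦ gaussianPDFReal μ v x * f x) := by
  rw [gaussianReal_of_var_ne_zero μ hv, gaussianPDF_def,
    integrable_withDensity_iff_integrable_smul' (by fun_prop) (by simp)] at hf
  simpa [ENNReal.toReal_ofReal (gaussianPDFReal_nonneg μ v _)] using hf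

lemma integral_mul_gaussianReal_eq_mul_integral_deriv (hv : v ≠ 0) {f f' : ℝ → ℝ}
    (hf : ∀ x, HasDerivAt f (f' x) x) (hf_int : Integrable f (gaussianReal 0 v))
    (hf'_int : Integrable f' (gaussianReal 0 v))
    (hxf_int : Integrable (fun x ↦ x * f x) (gaussianReal 0 v)) :
    ∫ x, x * f x ∂gaussianReal 0 v = v * ∫ x, f' x ∂gaussianReal 0 v := by
  have hv' : (v : ℝ) ≠ 0 := by exact_mod_cast hv
  have hderiv : ∀ x, HasDerivAt (fun x ↦ gaussianPDFReal 0 v x * f x)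
      (gaussianPDFReal 0 v x * f' x - (v : ℝ)⁻¹ * (gaussianPDFReal 0 v x * (x * f x))) x :=
    fun x ↦ ((hasDerivAt_gaussianPDFReal x).mul (hf x)).congr_deriv (by simp only [sub_zero]; ring)
  have h := integral_eq_zero_of_hasDerivAt_of_integrable hderiv
    ((integrable_gaussianPDFReal_mul hv hf'_int).sub
      ((integrable_gaussianPDFReal_mul hv hxf_int).const_mul _))
    (integrable_gaussianPDFReal_mul hv hf_int)
  rw [integral_sub (integrable_gaussianPDFReal_mul hv hf'_int)
    ((integrable_gaussianPDFReal_mul hv hxf_int).const_mul _), integral_const_mul] at h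
  simp only [integral_gaussianReal_eq_integral_smul hv, smul_eq_mul]
  field_simp at h ⊢
  linarith

lemma integrable_pow_gaussianReal (n : ℕ) : Integrable (fun x ↦ x ^ n) (gaussianReal μ v) :=
  integrable_pow_of_mem_interior_integrableExpSet (by simp) n

lemma integral_pow_add_two_gaussianReal (hv : v ≠ 0) (n : ℕ) :
    ∫ x, x ^ (n + 2) ∂gaussianReal 0 v = (n + 1) * v * ∫ x, x ^ n ∂gaussianReal 0 v := by
  have h := integral_mul_gaussianReal_eq_mul_integral_deriv hv
    (fun x ↦ hasDerivAt_pow (n + 1) x) (integrable_pow_gaussianReal _)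
    ((integrable_pow_gaussianReal n).const_mul _)
    (by simpa [← pow_succ'] using integrable_pow_gaussianReal (n + 2))
  simp only [← pow_succ', integral_const_mul] at h
  rw [h]
  push_cast
  ring

lemma integral_pow_gaussianReal_of_odd {n : ℕ} (hn : Odd n) :
    ∫ x, x ^ n ∂gaussianReal 0 v = 0 := by
  have h : ∫ x, x ^ n ∂gaussianReal 0 v = ∫ x, (-x) ^ n ∂gaussianReal 0 v := by
    conv_lhs => rw [← neg_zero, ← gaussianReal_map_neg, integral_map (by fun_prop) (by fun_prop)]
  simp only [hn.neg_pow, integral_neg] at h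
  linarith

lemma integral_sq_gaussianReal : ∫ x, x ^ 2 ∂gaussianReal 0 1 = 1 := by
  simpa using integral_pow_add_two_gaussianReal one_ne_zero 0

lemma integral_pow_four_gaussianReal : ∫ x, x ^ 4 ∂gaussianReal 0 1 = 3 := by
  rw [integral_pow_add_two_gaussianReal one_ne_zero 2, integral_sq_gaussianReal]
  norm_num

end OneDimensional

section Isserlis

variable {ι : Type*} [Fintype ι]

lemma dotProduct_mul_dotProduct_mul_dotProduct_mul_dotProduct (x a b c e : ι → ℝ) :
    (x ⬝ᵥ a) * (x ⬝ᵥ b) * (x ⬝ᵥ c) * (x ⬝ᵥ e) =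
      ∑ s, ∑ r, ∑ q, ∑ p, a p * b q * c r * e s * (x p * x q * x r * x s) := by
  simp only [dotProduct, Finset.sum_mul, Finset.mul_sum]
  refine Finset.sum_congr rfl fun s _ ↦ Finset.sum_congr rfl fun r _ ↦
    Finset.sum_congr rfl fun q _ ↦ Finset.sum_congr rfl fun p _ ↦ by ring

variable [DecidableEq ι]

lemma integral_multiset_prod_pi (μ : Measure ℝ) [SigmaFinite μ] (m : Multiset ι) :
    ∫ x : ι → ℝ, (m.map x).prod ∂Measure.pi (fun _ ↦ μ) = ∏ l, ∫ y, y ^ m.count l ∂μ := by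
  simp_rw [Multiset.prod_map_eq_prod_pow_count]
  exact integral_fintype_prod_eq_prod _

lemma integrable_multiset_prod_pi_gaussianReal (μ : ℝ) (v : ℝ≥0) (m : Multiset ι) :
    Integrable (fun x : ι → ℝ ↦ (m.map x).prod) (Measure.pi fun _ ↦ gaussianReal μ v) := by
  simp_rw [Multiset.prod_map_eq_prod_pow_count]
  exact Integrable.fintype_prod fun l ↦ integrable_pow_gaussianReal _

lemma integrable_mul_mul_mul_pi_gaussianReal (μ : ℝ) (v : ℝ≥0) (p q r s : ι) :
    Integrable (fun x : ι → ℝ ↦ x p * x q * x r * x s) (Measure.pi fun _ ↦ gaussianReal μ v) := by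
  simpa [mul_assoc] using integrable_multiset_prod_pi_gaussianReal μ v {p, q, r, s}

lemma integral_mul_mul_mul_pi_gaussianReal (p q r s : ι) :
    ∫ x : ι → ℝ, x p * x q * x r * x s ∂Measure.pi (fun _ ↦ gaussianReal 0 1) =
      (if p = q then 1 else 0) * (if r = s then 1 else 0)
      + (if p = r then 1 else 0) * (if q = s then 1 else 0)
      + (if p = s then 1 else 0) * (if q = r then 1 else 0) := by
  have h := integral_multiset_prod_pi (gaussianReal 0 1) {p, q, r, s}
  simp only [Multiset.insert_eq_cons, Multiset.map_cons, Multiset.prod_cons,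
    Multiset.map_singleton, Multiset.prod_singleton, ← mul_assoc] at h
  rw [h, ← Finset.prod_subset (Finset.subset_univ ({p, q, r, s} : Finset ι)) fun l _ hl ↦ by
    simp_all [Multiset.count_cons]]
  have h1 : ∫ y, y ^ 1 ∂gaussianReal 0 1 = 0 := integral_pow_gaussianReal_of_odd (by decide)
  have h3 : ∫ y, y ^ 3 ∂gaussianReal 0 1 = 0 := integral_pow_gaussianReal_of_odd (by decide)
  have h2 := integral_sq_gaussianReal
  have h4 := integral_pow_four_gaussianReal
  rcases eq_or_ne p q with hpq | hpq <;> rcases eq_or_ne p r with hpr | hpr <;>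
  rcases eq_or_ne p s with hps | hps <;> rcases eq_or_ne q r with hqr | hqr <;>
  rcases eq_or_ne q s with hqs | hqs <;> rcases eq_or_ne r s with hrs | hrs <;>
    subst_vars <;> simp_all [Multiset.count_cons, Finset.prod_insert, Ne.symm]
  norm_num

lemma integrable_dotProduct_mul_pi_gaussianReal (μ : ℝ) (v : ℝ≥0) (a b c e : ι → ℝ) :
    Integrable (fun x ↦ (x ⬝ᵥ a) * (x ⬝ᵥ b) * (x ⬝ᵥ c) * (x ⬝ᵥ e))
      (Measure.pi fun _ ↦ gaussianReal μ v) := by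
  simp_rw [dotProduct_mul_dotProduct_mul_dotProduct_mul_dotProduct]
  have := integrable_mul_mul_mul_pi_gaussianReal (ι := ι) μ v
  fun_prop

lemma integral_dotProduct_mul_pi_gaussianReal (a b c e : ι → ℝ) :
    ∫ x, (x ⬝ᵥ a) * (x ⬝ᵥ b) * (x ⬝ᵥ c) * (x ⬝ᵥ e) ∂Measure.pi (fun _ ↦ gaussianReal 0 1) =
      (a ⬝ᵥ b) * (c ⬝ᵥ e) + (a ⬝ᵥ c) * (b ⬝ᵥ e) + (a ⬝ᵥ e) * (b ⬝ᵥ c) := by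
  have := integrable_mul_mul_mul_pi_gaussianReal (ι := ι) 0 1
  simp_rw [dotProduct_mul_dotProduct_mul_dotProduct_mul_dotProduct]
  simp (disch := intros; fun_prop) only [integral_finsetSum, integral_const_mul,
    integral_mul_mul_mul_pi_gaussianReal]
  simp only [mul_ite, mul_one, mul_zero, mul_add, Finset.sum_add_distrib, Finset.sum_ite_irrel,
    Finset.sum_ite_eq', Finset.mem_univ, ↓reduceIte, Finset.sum_const_zero, dotProduct,
    Finset.mul_sum, Finset.sum_mul]
  rw [Finset.sum_comm (f := fun x y ↦ a x * b y * c y * e x)]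
  simp only [mul_comm, mul_left_comm]

lemma integral_sq_dotProduct_mul_dotProduct_mul_apply_pi_gaussianReal (a b : ι → ℝ) (i : ι) :
    ∫ x, (x ⬝ᵥ a) ^ 2 * (x ⬝ᵥ b) * x i ∂Measure.pi (fun _ ↦ gaussianReal 0 1) =
      2 * (a ⬝ᵥ b) * a i + (a ⬝ᵥ a) * b i := by
  have h := integral_dotProduct_mul_pi_gaussianReal a a b (Pi.single i 1)
  simp only [dotProduct_single, mul_one, ← sq] at h
  rw [h]
  ring

end Isserlis

end ProbabilityTheory

/-- The population gradient of the over-parametrized objective with respect to the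
`k`-th student neuron: for `x ~ N(0, I_d)`, teacher neuron `w_*` and student neurons
`w^{(1)}, …, w^{(K)}`, for every `k` and every coordinate `i`,
`E[(Σ_j ⟨x, w^{(j)}⟩² − ⟨x, w_*⟩²) ⟨x, w^{(k)}⟩ x]
  = (3‖w^{(k)}‖² − ‖w_*‖²) w^{(k)} − 2⟨w_*, w^{(k)}⟩ w_*
    + Σ_{j≠k} (2⟨w^{(j)}, w^{(k)}⟩ w^{(j)} + ‖w^{(j)}‖² w^{(k)})`. -/
theorem population_gradient_formula (d K : ℕ) (w : Fin K → Fin d → ℝ) (ws : Fin d → ℝ)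
    (k : Fin K) (i : Fin d) :
    ∫ x : Fin d → ℝ,
        ((∑ j, (x ⬝ᵥ w j) ^ 2) - (x ⬝ᵥ ws) ^ 2) * (x ⬝ᵥ w k) * x i
        ∂(Measure.pi fun _ => gaussianReal 0 1)
      = (3 * (w k ⬝ᵥ w k) - ws ⬝ᵥ ws) * w k i - 2 * (ws ⬝ᵥ w k) * ws i
        + ∑ j ∈ Finset.univ \ {k}, (2 * (w j ⬝ᵥ w k) * w j i + (w j ⬝ᵥ w j) * w k i) := by
  have hint (a : Fin d → ℝ) : Integrable (fun x ↦ (x ⬝ᵥ a) ^ 2 * (x ⬝ᵥ w k) * x i)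
      (Measure.pi fun _ => gaussianReal 0 1) := by
    simpa [sq, dotProduct_single] using
      integrable_dotProduct_mul_pi_gaussianReal 0 1 a a (w k) (Pi.single i 1)
  simp_rw [sub_mul, Finset.sum_mul]
  rw [integral_sub (integrable_finsetSum _ fun j _ ↦ hint (w j)) (hint ws),
    integral_finsetSum _ fun j _ ↦ hint (w j)]
  simp only [integral_sq_dotProduct_mul_dotProduct_mul_apply_pi_gaussianReal]
  rw [Finset.sdiff_singleton_eq_erase, ← Finset.add_sum_erase _ _ (Finset.mem_univ k)]
  ring
end

section
/- (Signal growth before the norm reaches ‖w_*‖²/3.) Let w_* ∈ ℝ^d be nonzero, let η > 0, and let the iterates follow the single-neuron population dynamics w_{s+1} = w_s − η[(3‖w_s‖² − ‖w_*‖²) w_s − 2⟨w_*, w_s⟩ w_*]. If for all 0 ≤ s < t it holds that ‖w_s‖² ≤ ‖w_*‖²/3, then |⟨w_t, w_*⟩| ≥ (1 + 2η‖w_*‖²)^t |⟨w₀, w_*⟩|, and consequently ‖w_t‖² ≥ (1 + 2η‖w_*‖²)^{2t} ⟨w₀, w_*⟩² / ‖w_*‖². -/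
open scoped RealInnerProductSpace

/-- Signal growth before the norm reaches `‖w_*‖²/3`: under the single-neuron population
dynamics `w_{s+1} = w_s − η[(3‖w_s‖² − ‖w_*‖²)w_s − 2⟨w_*, w_s⟩w_*]`, if `‖w_s‖² ≤ ‖w_*‖²/3`
for all `s < t`, then `|⟨w_t, w_*⟩| ≥ (1 + 2η‖w_*‖²)^t |⟨w₀, w_*⟩|` and
`‖w_t‖² ≥ (1 + 2η‖w_*‖²)^{2t} ⟨w₀, w_*⟩²/‖w_*‖²`. -/
theorem signal_growth (d : ℕ) (ws : EuclideanSpace ℝ (Fin d)) (hws : ws ≠ 0)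
    (η : ℝ) (hη : 0 < η) (w : ℕ → EuclideanSpace ℝ (Fin d))
    (hdyn : ∀ s, w (s + 1)
        = w s - η • ((3 * ‖w s‖ ^ 2 - ‖ws‖ ^ 2) • w s - (2 * ⟪ws, w s⟫) • ws))
    (t : ℕ) (hb : ∀ s < t, ‖w s‖ ^ 2 ≤ ‖ws‖ ^ 2 / 3) :
    (1 + 2 * η * ‖ws‖ ^ 2) ^ t * |⟪w 0, ws⟫| ≤ |⟪w t, ws⟫| ∧
      (1 + 2 * η * ‖ws‖ ^ 2) ^ (2 * t) * ⟪w 0, ws⟫ ^ 2 / ‖ws‖ ^ 2 ≤ ‖w t‖ ^ 2 := by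
  set A : ℝ := 1 + 2 * η * ‖ws‖ ^ 2 with hA
  have hwsn : (0:ℝ) < ‖ws‖ ^ 2 := by have := norm_pos_iff.mpr hws; positivity
  have hA1 : (1:ℝ) ≤ A := by nlinarith
  have hA0 : (0:ℝ) ≤ A := by linarith
  have key : A ^ t * |⟪w 0, ws⟫| ≤ |⟪w t, ws⟫| := by
    induction t with
    | zero => simp
    | succ n ih =>
      have hbn : ∀ s < n, ‖w s‖ ^ 2 ≤ ‖ws‖ ^ 2 / 3 := fun s hs => hb s (hs.trans (Nat.lt_succ_self n))
      have ih' := ih hbn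
      have hbound := hb n (Nat.lt_succ_self n)
      set c : ℝ := 1 + 3 * η * ‖ws‖ ^ 2 - 3 * η * ‖w n‖ ^ 2 with hc
      have hrec : ⟪w (n + 1), ws⟫ = c * ⟪w n, ws⟫ := by
        rw [hdyn n]
        simp only [inner_sub_left, real_inner_smul_left, inner_smul_left, RCLike.ofReal_real_eq_id,
          id_eq, real_inner_self_eq_norm_sq, starRingEnd_apply, star_trivial]
        rw [real_inner_comm ws (w n)]
        ring
      have hcA : A ≤ c := by
        rw [hA, hc]; nlinarith
      have : |⟪w (n + 1), ws⟫| = c * |⟪w n, ws⟫| := by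
        rw [hrec, abs_mul, abs_of_nonneg (by linarith : (0:ℝ) ≤ c)]
      rw [this, pow_succ]
      calc A ^ n * A * |⟪w 0, ws⟫| = A * (A ^ n * |⟪w 0, ws⟫|) := by ring
        _ ≤ A * |⟪w n, ws⟫| := by
            exact mul_le_mul_of_nonneg_left ih' hA0
        _ ≤ c * |⟪w n, ws⟫| := mul_le_mul_of_nonneg_right hcA (abs_nonneg _)
  refine ⟨key, ?_⟩
  have hcs : ⟪w t, ws⟫ ^ 2 ≤ ‖w t‖ ^ 2 * ‖ws‖ ^ 2 := by
    have := abs_real_inner_le_norm (w t) ws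
    nlinarith [abs_nonneg ⟪w t, ws⟫, abs_abs ⟪w t, ws⟫, sq_abs ⟪w t, ws⟫, norm_nonneg (w t), norm_nonneg ws]
  have hsq : (A ^ t * |⟪w 0, ws⟫|) ^ 2 ≤ ⟪w t, ws⟫ ^ 2 := by
    have h1 : (0:ℝ) ≤ A ^ t * |⟪w 0, ws⟫| := by positivity
    nlinarith [sq_abs ⟪w t, ws⟫, abs_nonneg ⟪w t, ws⟫]
  have hexp : (A ^ t * |⟪w 0, ws⟫|) ^ 2 = A ^ (2 * t) * ⟪w 0, ws⟫ ^ 2 := by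
    rw [mul_pow, ← pow_mul, sq_abs, mul_comm 2 t]
  rw [div_le_iff₀ hwsn]
  calc A ^ (2 * t) * ⟪w 0, ws⟫ ^ 2 = (A ^ t * |⟪w 0, ws⟫|) ^ 2 := hexp.symm
    _ ≤ ⟪w t, ws⟫ ^ 2 := hsq
    _ ≤ ‖w t‖ ^ 2 * ‖ws‖ ^ 2 := hcs
end

section
/- (Aggregate signal growth of the over-parametrized network; precise form of Lemma 2.) Let w_* ∈ ℝ^d be nonzero, let η > 0, θ ∈ [0, 1), t ∈ ℕ with 2tθ ≤ 1, and K ≥ 1. Let v₀, …, v_t ∈ ℝ^d and, for each k ∈ {1,…,K}, let w^{(k)}₀, …, w^{(k)}_t ∈ ℝ^d. Assume for all 0 ≤ s < t and all k: (i) |⟨w^{(k)}_{s+1}, w_*⟩| ≥ (1 − θ)|⟨w^{(k)}_s, w_*⟩| · (1 + 3η(‖w_*‖² − ‖w^{(k)}_s‖²)); (ii) ⟨v_{s+1}, w_*⟩ = ⟨v_s, w_*⟩ · (1 + 3η(‖w_*‖² − ‖v_s‖²)); (iii) ‖v_s‖ ≥ ‖w^{(k)}_s‖ and 1 + 3η(‖w_*‖²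 − ‖v_s‖²) ≥ 0. Assume further the initialization condition Σ_{k=1}^K ⟨w^{(k)}₀, w_*⟩² ≥ K ⟨v₀, w_*⟩². Then Σ_{k=1}^K ⟨w^{(k)}_t, w_*⟩² ≥ (1 − 2tθ) K ⟨v_t, w_*⟩². -/
open scoped RealInnerProductSpace

/-- Aggregate signal growth of the over-parametrized network (precise form of Lemma 2):
if each student neuron `w^{(k)}` follows the approximated parallel dynamics with
interaction error `θ`, the single neuron `v` follows the exact parallel dynamics,
`‖v_s‖ ≥ ‖w^{(k)}_s‖` with nonnegative growth factors, and the initialization satisfies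
`Σ_k ⟨w^{(k)}₀, w_*⟩² ≥ K⟨v₀, w_*⟩²`, then
`Σ_k ⟨w^{(k)}_t, w_*⟩² ≥ (1 − 2tθ) K ⟨v_t, w_*⟩²`. -/
theorem aggregate_signal_growth (d : ℕ) (ws : EuclideanSpace ℝ (Fin d)) (hws : ws ≠ 0)
    (η θ : ℝ) (hη : 0 < η) (hθ0 : 0 ≤ θ) (hθ1 : θ < 1)
    (t : ℕ) (htθ : 2 * (t : ℝ) * θ ≤ 1) (K : ℕ) (hK : 1 ≤ K)
    (v : ℕ → EuclideanSpace ℝ (Fin d)) (w : Fin K → ℕ → EuclideanSpace ℝ (Fin d))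
    (h1 : ∀ s < t, ∀ k : Fin K,
      (1 - θ) * |⟪w k s, ws⟫| * (1 + 3 * η * (‖ws‖ ^ 2 - ‖w k s‖ ^ 2))
        ≤ |⟪w k (s + 1), ws⟫|)
    (h2 : ∀ s < t, ⟪v (s + 1), ws⟫ = ⟪v s, ws⟫ * (1 + 3 * η * (‖ws‖ ^ 2 - ‖v s‖ ^ 2)))
    (h3 : ∀ s < t, ∀ k : Fin K, ‖w k s‖ ≤ ‖v s‖)
    (h4 : ∀ s < t, 0 ≤ 1 + 3 * η * (‖ws‖ ^ 2 - ‖v s‖ ^ 2))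
    (h0 : (K : ℝ) * ⟪v 0, ws⟫ ^ 2 ≤ ∑ k : Fin K, ⟪w k 0, ws⟫ ^ 2) :
    (1 - 2 * (t : ℝ) * θ) * K * ⟪v t, ws⟫ ^ 2 ≤ ∑ k : Fin K, ⟪w k t, ws⟫ ^ 2 := by
  have key : ∀ s, s ≤ t →
      (1 - θ) ^ (2 * s) * K * ⟪v s, ws⟫ ^ 2 ≤ ∑ k : Fin K, ⟪w k s, ws⟫ ^ 2 := by
    intro s
    induction s with
    | zero => intro _; simpa using h0
    | succ n ih =>
      intro hs
      have hn : n < t := hs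
      have ihn := ih (le_of_lt hn)
      set c := 1 + 3 * η * (‖ws‖ ^ 2 - ‖v n‖ ^ 2) with hc
      have hc0 : 0 ≤ c := h4 n hn
      have hθ' : (0:ℝ) ≤ 1 - θ := by linarith
      have hstep : ∀ k : Fin K,
          ((1 - θ) * |⟪w k n, ws⟫| * c) ^ 2 ≤ ⟪w k (n + 1), ws⟫ ^ 2 := by
        intro k
        have hck : c ≤ 1 + 3 * η * (‖ws‖ ^ 2 - ‖w k n‖ ^ 2) := by
          have h3' := h3 n hn k
          have hwn : 0 ≤ ‖w k n‖ := norm_nonneg _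
          have hsq : ‖w k n‖ ^ 2 ≤ ‖v n‖ ^ 2 := pow_le_pow_left₀ hwn h3' 2
          nlinarith [hη.le, hsq]
        have h1' := h1 n hn k
        have hle : (1 - θ) * |⟪w k n, ws⟫| * c ≤ |⟪w k (n + 1), ws⟫| := by
          calc (1 - θ) * |⟪w k n, ws⟫| * c
              ≤ (1 - θ) * |⟪w k n, ws⟫| * (1 + 3 * η * (‖ws‖ ^ 2 - ‖w k n‖ ^ 2)) := by
                apply mul_le_mul_of_nonneg_left hck
                exact mul_nonneg hθ' (abs_nonneg _)
            _ ≤ |⟪w k (n + 1), ws⟫| := h1'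
        have hnn : 0 ≤ (1 - θ) * |⟪w k n, ws⟫| * c :=
          mul_nonneg (mul_nonneg hθ' (abs_nonneg _)) hc0
        calc ((1 - θ) * |⟪w k n, ws⟫| * c) ^ 2
            ≤ |⟪w k (n + 1), ws⟫| ^ 2 := pow_le_pow_left₀ hnn hle 2
          _ = ⟪w k (n + 1), ws⟫ ^ 2 := sq_abs _
      have hsum : ∑ k : Fin K, ((1 - θ) * |⟪w k n, ws⟫| * c) ^ 2
          ≤ ∑ k : Fin K, ⟪w k (n + 1), ws⟫ ^ 2 := Finset.sum_le_sum fun k _ => hstep k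
      have hexp : ∑ k : Fin K, ((1 - θ) * |⟪w k n, ws⟫| * c) ^ 2
          = (1 - θ) ^ 2 * c ^ 2 * ∑ k : Fin K, ⟪w k n, ws⟫ ^ 2 := by
        rw [Finset.mul_sum]
        refine Finset.sum_congr rfl fun k _ => ?_
        rw [mul_pow, mul_pow, sq_abs]
        ring
      have hv : ⟪v (n + 1), ws⟫ ^ 2 = c ^ 2 * ⟪v n, ws⟫ ^ 2 := by
        rw [h2 n hn]; ring
      have hmul : (1 - θ) ^ 2 * c ^ 2 * ((1 - θ) ^ (2 * n) * K * ⟪v n, ws⟫ ^ 2)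
          ≤ (1 - θ) ^ 2 * c ^ 2 * ∑ k : Fin K, ⟪w k n, ws⟫ ^ 2 := by
        apply mul_le_mul_of_nonneg_left ihn
        positivity
      calc (1 - θ) ^ (2 * (n + 1)) * K * ⟪v (n + 1), ws⟫ ^ 2
          = (1 - θ) ^ 2 * c ^ 2 * ((1 - θ) ^ (2 * n) * K * ⟪v n, ws⟫ ^ 2) := by
            rw [hv]; ring
        _ ≤ (1 - θ) ^ 2 * c ^ 2 * ∑ k : Fin K, ⟪w k n, ws⟫ ^ 2 := hmul
        _ = ∑ k : Fin K, ((1 - θ) * |⟪w k n, ws⟫| * c) ^ 2 := hexp.symm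
        _ ≤ ∑ k : Fin K, ⟪w k (n + 1), ws⟫ ^ 2 := hsum
  have hkey := key t le_rfl
  have hbern : 1 + (2 * t : ℕ) * (-θ) ≤ (1 + (-θ)) ^ (2 * t) :=
    one_add_mul_le_pow (by linarith : (-2:ℝ) ≤ -θ) (2 * t)
  have hbern' : 1 - 2 * (t : ℝ) * θ ≤ (1 - θ) ^ (2 * t) := by
    rw [show (1:ℝ) + -θ = 1 - θ from by ring] at hbern
    push_cast at hbern
    linarith
  have hK0 : (0:ℝ) ≤ (K : ℝ) := Nat.cast_nonneg K
  nlinarith [sq_nonneg (⟪v t, ws⟫), mul_nonneg hK0 (sq_nonneg (⟪v t, ws⟫)),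
    mul_le_mul_of_nonneg_right hbern' (mul_nonneg hK0 (sq_nonneg (⟪v t, ws⟫)))]
end

section
/- (One-step ratio growth; precise form of the key step of Lemma 3.) Let w_* ∈ ℝ^d be nonzero, let 0 ≤ θ ≤ 1 and ϑ ≥ 0, and let 0 < η ≤ 1/(3‖w_*‖²). Let w, w' ∈ ℝ^d satisfy ‖w‖² ≤ ‖w_*‖², |⟨w', w_*⟩| ≥ (1 − θ)|⟨w, w_*⟩| · (1 + 3η(‖w_*‖² − ‖w‖²)), and ‖w'^⊥‖ ≤ (1 + ϑ)‖w^⊥‖ · (1 + η(‖w_*‖² − 3‖w‖²)), where w^⊥ denotes the component of w orthogonal to w_*. Then, with ψ := (1 − θ − ϑ − θϑ)(1 + η‖w_*‖²), it holds that |⟨w', w_*⟩| · ‖w^⊥‖ ≥ ψ · |⟨w, w_*⟩| · ‖w'^⊥‖. -/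
open scoped RealInnerProductSpace

/-- One-step ratio growth (key step of Lemma 3): under the approximated one-step
dynamics with interaction errors `θ` (parallel) and `ϑ` (perpendicular) and step size
`0 < η ≤ 1/(3‖w_*‖²)`, with `ψ := (1 − θ − ϑ − θϑ)(1 + η‖w_*‖²)`, one has
`|⟨w', w_*⟩| ‖w^⊥‖ ≥ ψ |⟨w, w_*⟩| ‖w'^⊥‖`, where `w^⊥ := w − (⟨w, w_*⟩/‖w_*‖²)w_*`. -/
theorem one_step_ratio_growth (d : ℕ) (ws : EuclideanSpace ℝ (Fin d)) (hws : ws ≠ 0)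
    (θ ϑ η : ℝ) (hθ0 : 0 ≤ θ) (hθ1 : θ ≤ 1) (hϑ : 0 ≤ ϑ)
    (hη0 : 0 < η) (hη : η ≤ 1 / (3 * ‖ws‖ ^ 2))
    (w w' : EuclideanSpace ℝ (Fin d))
    (hw : ‖w‖ ^ 2 ≤ ‖ws‖ ^ 2)
    (hpar : (1 - θ) * |⟪w, ws⟫| * (1 + 3 * η * (‖ws‖ ^ 2 - ‖w‖ ^ 2)) ≤ |⟪w', ws⟫|)
    (hperp : ‖w' - (⟪w', ws⟫ / ‖ws‖ ^ 2) • ws‖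
        ≤ (1 + ϑ) * ‖w - (⟪w, ws⟫ / ‖ws‖ ^ 2) • ws‖ * (1 + η * (‖ws‖ ^ 2 - 3 * ‖w‖ ^ 2))) :
    (1 - θ - ϑ - θ * ϑ) * (1 + η * ‖ws‖ ^ 2) * |⟪w, ws⟫|
        * ‖w' - (⟪w', ws⟫ / ‖ws‖ ^ 2) • ws‖
      ≤ |⟪w', ws⟫| * ‖w - (⟪w, ws⟫ / ‖ws‖ ^ 2) • ws‖ := by
  have hS : (0:ℝ) < ‖ws‖ ^ 2 := by
    have : ‖ws‖ ≠ 0 := norm_ne_zero_iff.mpr hws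
    positivity
  have hN : (0:ℝ) ≤ ‖w‖ ^ 2 := by positivity
  set S := ‖ws‖ ^ 2
  set N := ‖w‖ ^ 2
  set A := |⟪w, ws⟫|
  set B := ‖w - (⟪w, ws⟫ / S) • ws‖
  set A' := |⟪w', ws⟫|
  set B' := ‖w' - (⟪w', ws⟫ / S) • ws‖
  have hA : 0 ≤ A := abs_nonneg _
  have hB : 0 ≤ B := norm_nonneg _
  have hA' : 0 ≤ A' := abs_nonneg _
  have hB' : 0 ≤ B' := norm_nonneg _
  clear_value S N A B A' B'
  have h3 : 3 * η * S ≤ 1 := by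
    rw [le_div_iff₀ (by positivity)] at hη; nlinarith
  have hfac : 0 < 1 + η * (S - 3 * N) := by nlinarith
  have hpos : (0:ℝ) < 1 + η * S := by nlinarith
  rcases le_or_gt (1 - θ - ϑ - θ * ϑ) 0 with hψ0 | hψ0
  · have h1 : ((1 - θ - ϑ - θ * ϑ) * (1 + η * S)) * (A * B') ≤ 0 :=
      mul_nonpos_of_nonpos_of_nonneg
        (mul_nonpos_of_nonpos_of_nonneg hψ0 hpos.le) (mul_nonneg hA hB')
    have h2 : 0 ≤ A' * B := mul_nonneg hA' hB
    nlinarith [h1, h2]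
  · have hθ1' : θ < 1 := by nlinarith [mul_nonneg hθ0 hϑ]
    have k1 : (1 - θ - ϑ - θ * ϑ) * (1 + ϑ) ≤ 1 - θ := by
      nlinarith [mul_nonneg hθ0 hϑ, mul_nonneg hϑ hϑ,
        mul_nonneg (mul_nonneg hθ0 hϑ) hϑ]
    have hle1 : η * (S - 3 * N) ≤ 1 := by nlinarith
    have k2 : (1 + η * S) * (1 + η * (S - 3 * N)) ≤ 1 + 3 * η * (S - N) := by
      nlinarith [mul_nonneg (mul_nonneg hη0.le hS.le)
        (by linarith : (0:ℝ) ≤ 1 - η * (S - 3 * N))]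
    have key : ((1 - θ - ϑ - θ * ϑ) * (1 + ϑ)) * ((1 + η * S) * (1 + η * (S - 3 * N)))
        ≤ (1 - θ) * (1 + 3 * η * (S - N)) :=
      mul_le_mul k1 k2 (mul_nonneg hpos.le hfac.le) (by linarith)
    calc (1 - θ - ϑ - θ * ϑ) * (1 + η * S) * A * B'
        ≤ (1 - θ - ϑ - θ * ϑ) * (1 + η * S) * A
            * ((1 + ϑ) * B * (1 + η * (S - 3 * N))) := by
          apply mul_le_mul_of_nonneg_left hperp
          positivity
      _ = (((1 - θ - ϑ - θ * ϑ) * (1 + ϑ)) * ((1 + η * S) * (1 + η * (S - 3 * N))))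
            * (A * B) := by ring
      _ ≤ ((1 - θ) * (1 + 3 * η * (S - N))) * (A * B) :=
          mul_le_mul_of_nonneg_right key (mul_nonneg hA hB)
      _ = ((1 - θ) * A * (1 + 3 * η * (S - N))) * B := by ring
      _ ≤ A' * B := mul_le_mul_of_nonneg_right hpar hB
end

section
/- (Decay of the perpendicular-to-parallel ratio; precise form of Lemma 3.) Let w_* ∈ ℝ^d be nonzero, let 0 ≤ θ ≤ 1 and ϑ ≥ 0 with θ + ϑ + θϑ ≤ 1, and let 0 < η ≤ 1/(3‖w_*‖²). Let w₀, …, w_t ∈ ℝ^d satisfy, for all 0 ≤ s < t: ‖w_s‖² ≤ ‖w_*‖², |⟨w_{s+1}, w_*⟩| ≥ (1 − θ)|⟨w_s, w_*⟩| · (1 + 3η(‖w_*‖² − ‖w_s‖²)), and ‖w_{s+1}^⊥‖ ≤ (1 + ϑ)‖w_s^⊥‖ · (1 + η(‖w_*‖² − 3‖w_s‖²)). Then, with ψ := (1 − θ − ϑ − θϑ)(1 + η‖w_*‖²), it holds that ψ^t · ‖w_t^⊥‖ · |⟨w₀, w_*⟩| ≤ |⟨w_t, w_*⟩| · ‖w₀^⊥‖.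 -/
/-!
Write `p s = ‖w_s^⊥‖` and `q s = |⟨w_s, w_*⟩|`. The hypotheses say that in one step the parallel
component grows at least by the factor `c = (1 - θ)(1 + 3η(‖w_*‖² - ‖w_s‖²))` and the perpendicular
one at most by `d = (1 + ϑ)(1 + η(‖w_*‖² - 3‖w_s‖²))`. An elementary inequality gives `ψ d ≤ c`
whenever `‖w_s‖ ≤ ‖w_*‖`, and multiplying the step bounds gives
`ψ^t p_t q_0 ≤ (∏ ψ d) p_0 q_0 ≤ (∏ c) q_0 p_0 ≤ q_t p_0`.
-/

open scoped RealInnerProductSpace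
open Finset

section ProductBounds

variable {R : Type*} [CommSemiring R] [PartialOrder R] [IsOrderedRing R]

theorem le_prod_range_mul_of_le_mul {p d : ℕ → R} {t : ℕ} (hd : ∀ s < t, 0 ≤ d s)
    (h : ∀ s < t, p (s + 1) ≤ d s * p s) : p t ≤ (∏ s ∈ range t, d s) * p 0 := by
  induction t with
  | zero => simp
  | succ n ih =>
    calc p (n + 1) ≤ d n * p n := h n n.lt_succ_self
      _ ≤ d n * ((∏ s ∈ range n, d s) * p 0) :=
        mul_le_mul_of_nonneg_left
          (ih (fun s hs => hd s (by omega)) fun s hs => h s (by omega)) (hd n n.lt_succ_self)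
      _ = (∏ s ∈ range (n + 1), d s) * p 0 := by rw [prod_range_succ]; ring

theorem prod_range_mul_le_of_mul_le {q c : ℕ → R} {t : ℕ} (hc : ∀ s < t, 0 ≤ c s)
    (h : ∀ s < t, c s * q s ≤ q (s + 1)) : (∏ s ∈ range t, c s) * q 0 ≤ q t := by
  induction t with
  | zero => simp
  | succ n ih =>
    calc (∏ s ∈ range (n + 1), c s) * q 0 = c n * ((∏ s ∈ range n, c s) * q 0) := by
          rw [prod_range_succ]; ring
      _ ≤ c n * q n :=
        mul_le_mul_of_nonneg_left
          (ih (fun s hs => hc s (by omega)) fun s hs => h s (by omega)) (hc n n.lt_succ_self)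
      _ ≤ q (n + 1) := h n n.lt_succ_self

theorem pow_mul_mul_le_of_growth_bounds {p q c d : ℕ → R} {ψ : R} {t : ℕ} (hψ : 0 ≤ ψ)
    (hp : 0 ≤ p 0) (hq : 0 ≤ q 0) (hd : ∀ s < t, 0 ≤ d s) (hψdc : ∀ s < t, ψ * d s ≤ c s)
    (hpd : ∀ s < t, p (s + 1) ≤ d s * p s) (hcq : ∀ s < t, c s * q s ≤ q (s + 1)) :
    ψ ^ t * p t * q 0 ≤ q t * p 0 := by
  have hψd : ∀ s < t, 0 ≤ ψ * d s := fun s hs => mul_nonneg hψ (hd s hs)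
  calc ψ ^ t * p t * q 0 ≤ ψ ^ t * ((∏ s ∈ range t, d s) * p 0) * q 0 := by
        gcongr
        exact le_prod_range_mul_of_le_mul hd hpd
    _ = (∏ s ∈ range t, ψ * d s) * q 0 * p 0 := by
        rw [prod_mul_distrib, prod_const, card_range]; ring
    _ ≤ (∏ s ∈ range t, c s) * q 0 * p 0 := by
        gcongr with s hs
        · exact fun i hi => hψd i (mem_range.mp hi)
        · exact hψdc s (mem_range.mp hs)
    _ ≤ q t * p 0 := by
        gcongr
        exact prod_range_mul_le_of_mul_le (fun s hs => (hψd s hs).trans (hψdc s hs)) hcq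

end ProductBounds

section StepFactors

variable {θ ϑ η A a : ℝ}

theorem interaction_factor_mul_le (hθ : 0 ≤ θ) (hϑ : 0 ≤ ϑ) :
    (1 - θ - ϑ - θ * ϑ) * (1 + ϑ) ≤ 1 - θ := by
  nlinarith [mul_nonneg hθ hϑ, mul_nonneg (mul_nonneg hθ hϑ) hϑ]

theorem perp_dynamics_factor_nonneg (hη : 0 ≤ η) (hηA : η * A ≤ 1 / 3) (haA : a ≤ A) :
    0 ≤ 1 + η * (A - 3 * a) := by
  nlinarith [mul_le_mul_of_nonneg_left haA hη]

theorem dynamics_factor_mul_le (hη : 0 ≤ η) (hηA : η * A ≤ 1 / 3) (ha : 0 ≤ a) (haA : a ≤ A) :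
    (1 + η * A) * (1 + η * (A - 3 * a)) ≤ 1 + 3 * η * (A - a) := by
  have hηA0 : 0 ≤ η * A := mul_nonneg hη (ha.trans haA)
  -- the difference of the two sides is `ηA (1 - ηA) + 3 η² A a`
  nlinarith [mul_nonneg hηA0 (by linarith : 0 ≤ 1 - η * A), mul_nonneg (mul_nonneg hηA0 hη) ha]

theorem rate_mul_perp_step_factor_le (hθ : 0 ≤ θ) (hϑ : 0 ≤ ϑ) (hθϑ : θ + ϑ + θ * ϑ ≤ 1)
    (hη : 0 ≤ η) (hηA : η * A ≤ 1 / 3) (ha : 0 ≤ a) (haA : a ≤ A) :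
    (1 - θ - ϑ - θ * ϑ) * (1 + η * A) * ((1 + ϑ) * (1 + η * (A - 3 * a)))
      ≤ (1 - θ) * (1 + 3 * η * (A - a)) := by
  calc (1 - θ - ϑ - θ * ϑ) * (1 + η * A) * ((1 + ϑ) * (1 + η * (A - 3 * a)))
      = ((1 - θ - ϑ - θ * ϑ) * (1 + ϑ)) * ((1 + η * A) * (1 + η * (A - 3 * a))) := by ring
    _ ≤ (1 - θ) * (1 + 3 * η * (A - a)) := by
        refine mul_le_mul (interaction_factor_mul_le hθ hϑ) (dynamics_factor_mul_le hη hηA ha haA)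
          ?_ ?_
        · exact mul_nonneg (by linarith [mul_nonneg hη (ha.trans haA)])
            (perp_dynamics_factor_nonneg hη hηA haA)
        · linarith [mul_nonneg hθ hϑ]

end StepFactors

theorem perpendicular_ratio_decay_general (d : ℕ) (ws : EuclideanSpace ℝ (Fin d))
    (θ ϑ η : ℝ) (hθ0 : 0 ≤ θ) (hϑ : 0 ≤ ϑ) (hθϑ : θ + ϑ + θ * ϑ ≤ 1)
    (hη0 : 0 < η) (hη : η ≤ 1 / (3 * ‖ws‖ ^ 2))
    (t : ℕ) (w : ℕ → EuclideanSpace ℝ (Fin d))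
    (hw : ∀ s < t, ‖w s‖ ^ 2 ≤ ‖ws‖ ^ 2)
    (hpar : ∀ s < t,
      (1 - θ) * |⟪w s, ws⟫| * (1 + 3 * η * (‖ws‖ ^ 2 - ‖w s‖ ^ 2)) ≤ |⟪w (s + 1), ws⟫|)
    (hperp : ∀ s < t,
      ‖w (s + 1) - (⟪w (s + 1), ws⟫ / ‖ws‖ ^ 2) • ws‖
        ≤ (1 + ϑ) * ‖w s - (⟪w s, ws⟫ / ‖ws‖ ^ 2) • ws‖
          * (1 + η * (‖ws‖ ^ 2 - 3 * ‖w s‖ ^ 2))) :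
    ((1 - θ - ϑ - θ * ϑ) * (1 + η * ‖ws‖ ^ 2)) ^ t
        * ‖w t - (⟪w t, ws⟫ / ‖ws‖ ^ 2) • ws‖ * |⟪w 0, ws⟫|
      ≤ |⟪w t, ws⟫| * ‖w 0 - (⟪w 0, ws⟫ / ‖ws‖ ^ 2) • ws‖ := by
  have hηA : η * ‖ws‖ ^ 2 ≤ 1 / 3 := by
    have := mul_le_of_le_div₀ zero_le_one (by positivity) hη
    linarith
  have hψ : 0 ≤ (1 - θ - ϑ - θ * ϑ) * (1 + η * ‖ws‖ ^ 2) :=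
    mul_nonneg (by linarith) (by nlinarith [sq_nonneg ‖ws‖])
  refine pow_mul_mul_le_of_growth_bounds hψ (norm_nonneg _) (abs_nonneg _)
    (p := fun s => ‖w s - (⟪w s, ws⟫ / ‖ws‖ ^ 2) • ws‖) (q := fun s => |⟪w s, ws⟫|)
    (d := fun s => (1 + ϑ) * (1 + η * (‖ws‖ ^ 2 - 3 * ‖w s‖ ^ 2)))
    (c := fun s => (1 - θ) * (1 + 3 * η * (‖ws‖ ^ 2 - ‖w s‖ ^ 2)))
    (fun s hs => mul_nonneg (by linarith) (perp_dynamics_factor_nonneg hη0.le hηA (hw s hs)))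
    (fun s hs => rate_mul_perp_step_factor_le hθ0 hϑ hθϑ hη0.le hηA (sq_nonneg ‖w s‖) (hw s hs))
    (fun s hs => ?_) (fun s hs => ?_)
  · exact (hperp s hs).trans_eq (by ring)
  · exact (hpar s hs).trans_eq' (by ring)

/-- Decay of the perpendicular-to-parallel ratio (precise form of Lemma 3): under the
approximated dynamics with interaction errors `θ` and `ϑ` (with `θ + ϑ + θϑ ≤ 1`) and
step size `0 < η ≤ 1/(3‖w_*‖²)`, with `ψ := (1 − θ − ϑ − θϑ)(1 + η‖w_*‖²)`, one has
`ψ^t ‖w_t^⊥‖ |⟨w₀, w_*⟩| ≤ |⟨w_t, w_*⟩| ‖w₀^⊥‖`, where `w^⊥ := w − (⟨w, w_*⟩/‖w_*‖²)w_*`. -/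
theorem perpendicular_ratio_decay (d : ℕ) (ws : EuclideanSpace ℝ (Fin d)) (hws : ws ≠ 0)
    (θ ϑ η : ℝ) (hθ0 : 0 ≤ θ) (hθ1 : θ ≤ 1) (hϑ : 0 ≤ ϑ) (hθϑ : θ + ϑ + θ * ϑ ≤ 1)
    (hη0 : 0 < η) (hη : η ≤ 1 / (3 * ‖ws‖ ^ 2))
    (t : ℕ) (w : ℕ → EuclideanSpace ℝ (Fin d))
    (hw : ∀ s < t, ‖w s‖ ^ 2 ≤ ‖ws‖ ^ 2)
    (hpar : ∀ s < t,
      (1 - θ) * |⟪w s, ws⟫| * (1 + 3 * η * (‖ws‖ ^ 2 - ‖w s‖ ^ 2)) ≤ |⟪w (s + 1), ws⟫|)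
    (hperp : ∀ s < t,
      ‖w (s + 1) - (⟪w (s + 1), ws⟫ / ‖ws‖ ^ 2) • ws‖
        ≤ (1 + ϑ) * ‖w s - (⟪w s, ws⟫ / ‖ws‖ ^ 2) • ws‖
          * (1 + η * (‖ws‖ ^ 2 - 3 * ‖w s‖ ^ 2))) :
    ((1 - θ - ϑ - θ * ϑ) * (1 + η * ‖ws‖ ^ 2)) ^ t
        * ‖w t - (⟪w t, ws⟫ / ‖ws‖ ^ 2) • ws‖ * |⟪w 0, ws⟫|
      ≤ |⟪w t, ws⟫| * ‖w 0 - (⟪w 0, ws⟫ / ‖ws‖ ^ 2) • ws‖ :=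
  perpendicular_ratio_decay_general d ws θ ϑ η hθ0 hϑ hθϑ hη0 hη t w hw hpar hperp
end

section
/- (Distance gap between the small and the over-parametrized network; precise form of Theorem 2.) Let w_* ∈ ℝ^d be nonzero, let K ≥ 1, let t ∈ ℕ and θ ≥ 0 with 2tθ ≤ 1, and let c₁ ∈ (0,1) and c₂ > 0. Let v ∈ ℝ^d (the single-neuron student network at time t) and W ∈ ℝ^{d×K} with columns w^{(1)}, …, w^{(K)} (the over-parametrized student network at time t) satisfy: (i) |⟨v, w_*⟩| = c₁‖w_*‖²; (ii) Σ_{k=1}^K ⟨w^{(k)}, w_*⟩² ≥ (1 − 2tθ) K ⟨v, w_*⟩²; (iii) ‖W‖_F² ≤ K(c₁² + c₂²)‖w_*‖². Then dist²(v, w_*) − dist²(W, w_*) ≥ ‖w_*‖² ( 2c₁(√((1 − 2tθ)K) − 1) − K(c₁² + c₂²) + c₁² ). -/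
/-!
Testing the infimum defining `dist²(W, w_*)` at the unit vector `q` proportional to
`g = (⟨w^{(k)}, w_*⟩)_k` gives `dist²(W, w_*) ≤ ‖W‖_F² + ‖w_*‖² − 2‖g‖`, and the signal-growth
hypothesis bounds `‖g‖` below by `√((1 − 2tθ)K) · c₁‖w_*‖²`. On the other side, Cauchy–Schwarz
turns `|⟨v, w_*⟩| = c₁‖w_*‖²` into `‖v‖² ≥ c₁²‖w_*‖²`. Together with the norm bound on `W` this
is exactly the claimed gap.
-/

open Matrix

/-- `dist²(W, w_*) := min_{‖q‖₂ ≤ 1} ‖W − w_* qᵀ‖_F²` (squared distance to the set of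
global optima), written as an infimum. -/
noncomputable def distSq {d K : ℕ} (W : Matrix (Fin d) (Fin K) ℝ) (ws : Fin d → ℝ) : ℝ :=
  sInf {r : ℝ | ∃ q : Fin K → ℝ, (∑ k, q k ^ 2) ≤ 1 ∧
    r = ∑ i, ∑ k, (W i k - ws i * q k) ^ 2}

section

variable {ι κ : Type*} [Fintype ι] [Fintype κ]

/-- `g / ‖g‖`, which is `0` when `g = 0` since `0 / 0 = 0`. -/
theorem exists_sum_sq_le_one_sum_mul_eq_sqrt (g : ι → ℝ) :
    ∃ q : ι → ℝ, ∑ i, q i ^ 2 ≤ 1 ∧ ∑ i, q i * g i = √(∑ i, g i ^ 2) := by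
  set S := ∑ i, g i ^ 2
  have hS : √S ^ 2 = S := Real.sq_sqrt (Finset.sum_nonneg fun i _ => sq_nonneg (g i))
  refine ⟨fun i => g i / √S, ?_, ?_⟩
  · simp only [div_pow, ← Finset.sum_div, hS]
    exact div_self_le_one S
  · simp only [div_mul_eq_mul_div, ← sq, ← Finset.sum_div]
    exact Real.div_sqrt

theorem sq_mul_sum_sq_le_of_abs_dotProduct_eq {v w : ι → ℝ} {c : ℝ}
    (h : |v ⬝ᵥ w| = c * ∑ i, w i ^ 2) :
    c ^ 2 * ∑ i, w i ^ 2 ≤ ∑ i, v i ^ 2 := by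
  set A := ∑ i, w i ^ 2
  have hA : 0 ≤ A := Finset.sum_nonneg fun i _ => sq_nonneg (w i)
  have hcs : (c * A) ^ 2 ≤ (∑ i, v i ^ 2) * A := by
    rw [← h, sq_abs]
    exact Finset.sum_mul_sq_le_sq_mul_sq Finset.univ v w
  rcases hA.eq_or_lt with hA0 | hApos
  · rw [← hA0, mul_zero]
    exact Finset.sum_nonneg fun i _ => sq_nonneg (v i)
  · nlinarith

theorem sum_sum_sub_mul_sq (W : Matrix ι κ ℝ) (ws : ι → ℝ) (q : κ → ℝ) :
    ∑ i, ∑ k, (W i k - ws i * q k) ^ 2 = ∑ i, ∑ k, W i k ^ 2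
      - 2 * ∑ k, q k * ∑ i, W i k * ws i + (∑ i, ws i ^ 2) * ∑ k, q k ^ 2 := by
  have hexpand (i : ι) (k : κ) : (W i k - ws i * q k) ^ 2
      = W i k ^ 2 - 2 * (q k * (W i k * ws i)) + ws i ^ 2 * q k ^ 2 := by ring
  simp only [hexpand, Finset.sum_add_distrib, Finset.sum_sub_distrib, ← Finset.mul_sum,
    ← Finset.sum_mul]
  rw [Finset.sum_comm (f := fun i k => q k * (W i k * ws i))]
  simp only [Finset.mul_sum]

end

theorem distSq_le {d K : ℕ} (W : Matrix (Fin d) (Fin K) ℝ) (ws : Fin d → ℝ) :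
    distSq W ws ≤ ∑ i, ∑ k, W i k ^ 2 + ∑ i, ws i ^ 2
      - 2 * √(∑ k, (∑ i, W i k * ws i) ^ 2) := by
  obtain ⟨q, hq, hqg⟩ := exists_sum_sq_le_one_sum_mul_eq_sqrt fun k => ∑ i, W i k * ws i
  have hbdd : BddBelow {r : ℝ | ∃ q : Fin K → ℝ, (∑ k, q k ^ 2) ≤ 1 ∧
      r = ∑ i, ∑ k, (W i k - ws i * q k) ^ 2} := by
    refine ⟨0, ?_⟩
    rintro r ⟨q, -, rfl⟩
    positivity
  calc distSq W ws ≤ ∑ i, ∑ k, (W i k - ws i * q k) ^ 2 := csInf_le hbdd ⟨q, hq, rfl⟩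
    _ ≤ _ := by
      rw [sum_sum_sub_mul_sq, hqg]
      have hA : 0 ≤ ∑ i, ws i ^ 2 := by positivity
      nlinarith

theorem distance_gap_general (d K : ℕ) (ws : Fin d → ℝ) (t : ℕ) (θ : ℝ) (c₁ c₂ : ℝ)
    (v : Fin d → ℝ) (W : Matrix (Fin d) (Fin K) ℝ)
    (h1 : |v ⬝ᵥ ws| = c₁ * (∑ i, ws i ^ 2))
    (h2 : (1 - 2 * (t : ℝ) * θ) * K * (v ⬝ᵥ ws) ^ 2 ≤ ∑ k, (∑ i, W i k * ws i) ^ 2)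
    (h3 : ∑ i, ∑ k, W i k ^ 2 ≤ K * (c₁ ^ 2 + c₂ ^ 2) * (∑ i, ws i ^ 2)) :
    (∑ i, ws i ^ 2) * (2 * c₁ * (Real.sqrt ((1 - 2 * (t : ℝ) * θ) * K) - 1)
        - K * (c₁ ^ 2 + c₂ ^ 2) + c₁ ^ 2)
      ≤ ((∑ i, v i ^ 2) + (∑ i, ws i ^ 2) - 2 * |v ⬝ᵥ ws|) - distSq W ws := by
  have hv := sq_mul_sum_sq_le_of_abs_dotProduct_eq h1
  have hsignal : √((1 - 2 * (t : ℝ) * θ) * K) * (c₁ * ∑ i, ws i ^ 2)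
      ≤ √(∑ k, (∑ i, W i k * ws i) ^ 2) := by
    rw [← h1, ← Real.sqrt_sq_eq_abs, ← Real.sqrt_mul' _ (sq_nonneg _)]
    exact Real.sqrt_le_sqrt h2
  have hdist := distSq_le W ws
  rw [h1]
  linarith

/-- Distance gap between the small and the over-parametrized network (precise form of
Theorem 2): if `|⟨v, w_*⟩| = c₁‖w_*‖²`, `Σ_k ⟨w^{(k)}, w_*⟩² ≥ (1 − 2tθ)K⟨v, w_*⟩²`, and
`‖W‖_F² ≤ K(c₁² + c₂²)‖w_*‖²`, then
`dist²(v, w_*) − dist²(W, w_*)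
  ≥ ‖w_*‖²(2c₁(√((1 − 2tθ)K) − 1) − K(c₁² + c₂²) + c₁²)`,
where `dist²(v, w_*) = ‖v‖² + ‖w_*‖² − 2|⟨v, w_*⟩|`. -/
theorem distance_gap (d K : ℕ) (ws : Fin d → ℝ) (hws : ws ≠ 0) (hK : 1 ≤ K)
    (t : ℕ) (θ : ℝ) (hθ : 0 ≤ θ) (htθ : 2 * (t : ℝ) * θ ≤ 1)
    (c₁ c₂ : ℝ) (hc₁0 : 0 < c₁) (hc₁1 : c₁ < 1) (hc₂ : 0 < c₂)
    (v : Fin d → ℝ) (W : Matrix (Fin d) (Fin K) ℝ)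
    (h1 : |v ⬝ᵥ ws| = c₁ * (∑ i, ws i ^ 2))
    (h2 : (1 - 2 * (t : ℝ) * θ) * K * (v ⬝ᵥ ws) ^ 2 ≤ ∑ k, (∑ i, W i k * ws i) ^ 2)
    (h3 : ∑ i, ∑ k, W i k ^ 2 ≤ K * (c₁ ^ 2 + c₂ ^ 2) * (∑ i, ws i ^ 2)) :
    (∑ i, ws i ^ 2) * (2 * c₁ * (Real.sqrt ((1 - 2 * (t : ℝ) * θ) * K) - 1)
        - K * (c₁ ^ 2 + c₂ ^ 2) + c₁ ^ 2)
      ≤ ((∑ i, v i ^ 2) + (∑ i, ws i ^ 2) - 2 * |v ⬝ᵥ ws|) - distSq W ws :=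
  distance_gap_general d K ws t θ c₁ c₂ v W h1 h2 h3
end
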